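/- For 0 ≤ q ≤ 1 let K_q = ((1+q)/2) |Φ_00⟩⟨Φ_00| + ((1−q)/2) |Φ_01⟩⟨Φ_01| be the Choi state of the qubit dephasing channel D^ph_q. Then for 0 ≤ q, q' ≤ 1: K_{q'} lies in the convex hull of { (U ⊗ V) K_q (U ⊗ V)† : U, V ∈ U(2) } (an allowed operation maps D^ph_q to D^ph_{q'}) if and only if q' ≤ q. -/

import Mathlib

open Matrix Kronecker

noncomputable section

/-- The qubit discrete Weyl operators `W_nm = Σ_c (−1)^{mc} |n+c⟩⟨c|`. -/
def Wq (n m : ZMod 2) : Matrix (ZMod 2) (ZMod 2) ℂ :=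
  Matrix.of fun r c => if r = n + c then (-1 : ℂ) ^ (m.val * c.val) else 0

/-- The qubit Bell basis vector `|Φ_nm⟩ = (I ⊗ W_nm)|Φ_00⟩`. -/
def bell (n m : ZMod 2) : ZMod 2 × ZMod 2 → ℂ :=
  fun p => ((Real.sqrt 2 : ℝ) : ℂ)⁻¹ * Wq n m p.2 p.1

/-- The Bell projector `|Φ_nm⟩⟨Φ_nm|`. -/
def bellProj (n m : ZMod 2) : Matrix (ZMod 2 × ZMod 2) (ZMod 2 × ZMod 2) ℂ :=
  Matrix.of fun p q => bell n m p * (starRingEnd ℂ) (bell n m q)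

/-- The set `{ (U ⊗ V) J (U ⊗ V)† : U, V ∈ U(2) }`. -/
def allowedSet (J : Matrix (ZMod 2 × ZMod 2) (ZMod 2 × ZMod 2) ℂ) :
    Set (Matrix (ZMod 2 × ZMod 2) (ZMod 2 × ZMod 2) ℂ) :=
  { K | ∃ U ∈ Matrix.unitaryGroup (ZMod 2) ℂ, ∃ V ∈ Matrix.unitaryGroup (ZMod 2) ℂ,
      K = (U ⊗ₖ V) * J * (U ⊗ₖ V)ᴴ }

/-- The Choi state `J_s = s |Φ_00⟩⟨Φ_00| + ((1−s)/4) I₄` of the qubit depolarising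
channel `D^pol_s`. -/
def Jdep (s : ℝ) : Matrix (ZMod 2 × ZMod 2) (ZMod 2 × ZMod 2) ℂ :=
  s • bellProj 0 0 + ((1 - s) / 4) • (1 : Matrix (ZMod 2 × ZMod 2) (ZMod 2 × ZMod 2) ℂ)

/-- The Choi state `K_q = ((1+q)/2)|Φ_00⟩⟨Φ_00| + ((1−q)/2)|Φ_01⟩⟨Φ_01|` of the qubit
dephasing channel `D^ph_q`. -/
def Kdeph (q : ℝ) : Matrix (ZMod 2 × ZMod 2) (ZMod 2 × ZMod 2) ℂ :=
  ((1 + q) / 2) • bellProj 0 0 + ((1 - q) / 2) • bellProj 0 1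

/-! The fidelity `M ↦ Re ⟨Φ_00|M|Φ_00⟩` is real-linear and equals `(1 + q')/2` at `K_{q'}`. On every
`(U ⊗ V) K_q (U ⊗ V)†` it is at most `(1 + q)/2`, because
`((1 + q)/2) I − K_q = ((1 + q)/2)(|Φ_10⟩⟨Φ_10| + |Φ_11⟩⟨Φ_11|) + q |Φ_01⟩⟨Φ_01|` is positive
semidefinite; the bound passes to the convex hull and forces `q' ≤ q`. Conversely, conjugation by
`I ⊗ Z` maps `K_q` to `K_{-q}`, and `q ↦ K_q` is affine, so `K_{q'}` lies on the segment from `K_q`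
to `K_{-q}` whenever `-q ≤ q' ≤ q`. -/

open scoped ComplexOrder

section Expectation

variable {ι : Type*} [Fintype ι]

lemma isLinearMap_re_dotProduct_mulVec (v : ι → ℂ) :
    IsLinearMap ℝ fun M : Matrix ι ι ℂ => (star v ⬝ᵥ (M *ᵥ v)).re where
  map_add M N := by simp only [add_mulVec, dotProduct_add, Complex.add_re]
  map_smul c M := by simp [smul_mulVec, dotProduct_smul]

lemma re_dotProduct_conj_mulVec_le [DecidableEq ι] {K A : Matrix ι ι ℂ} {c : ℝ}
    (hK : (c • 1 - K).PosSemidef) (hA : A ∈ unitaryGroup ι ℂ) {v : ι → ℂ} (hv : star v ⬝ᵥ v = 1) :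
    (star v ⬝ᵥ ((A * K * Aᴴ) *ᵥ v)).re ≤ c := by
  have hconj : A * (c • 1 - K) * Aᴴ = c • 1 - A * K * Aᴴ := by
    rw [mul_sub, sub_mul, Matrix.mul_smul, mul_one, Matrix.smul_mul,
      ← star_eq_conjTranspose, mem_unitaryGroup_iff.mp hA]
  have hnonneg := (hK.mul_mul_conjTranspose_same A).dotProduct_mulVec_nonneg v
  rw [hconj, sub_mulVec, smul_mulVec, one_mulVec, dotProduct_sub, dotProduct_smul, hv] at hnonneg
  simpa using Complex.re_le_re hnonneg

end Expectation

lemma sum_zmod_two {M : Type*} [AddCommMonoid M] (f : ZMod 2 → M) : ∑ i, f i = f 0 + f 1 :=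
  Fin.sum_univ_two f

lemma zmod_two_cases : ∀ a : ZMod 2, a = 0 ∨ a = 1 := by decide

lemma sqrt_two_inv_mul_self : ((√2 : ℝ) : ℂ)⁻¹ * ((√2 : ℝ) : ℂ)⁻¹ = 1 / 2 := by
  rw [← mul_inv, ← Complex.ofReal_mul, Real.mul_self_sqrt zero_le_two]
  norm_num

lemma bellProj_eq_vecMulVec (n m : ZMod 2) :
    bellProj n m = vecMulVec (bell n m) (star (bell n m)) := rfl

lemma sum_bellProj : ∑ n, ∑ m, bellProj n m = 1 := by
  ext ⟨a, b⟩ ⟨c, d⟩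
  simp only [sum_zmod_two, Matrix.add_apply]
  rcases zmod_two_cases a with rfl | rfl <;> rcases zmod_two_cases b with rfl | rfl <;>
  rcases zmod_two_cases c with rfl | rfl <;> rcases zmod_two_cases d with rfl | rfl <;>
    norm_num (config := { decide := true }) [bellProj, bell, Wq, sqrt_two_inv_mul_self]

lemma star_bell_dotProduct_bell_zero_zero (m : ZMod 2) :
    star (bell 0 m) ⬝ᵥ bell 0 0 = if m = 0 then 1 else 0 := by
  rcases zmod_two_cases m with rfl | rfl <;>
    norm_num (config := { decide := true }) [dotProduct, Fintype.sum_prod_type, sum_zmod_two,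
      bell, Wq, sqrt_two_inv_mul_self]

lemma Wq_zero_one_mem_unitaryGroup : Wq 0 1 ∈ unitaryGroup (ZMod 2) ℂ := by
  rw [mem_unitaryGroup_iff]
  ext i j
  rcases zmod_two_cases i with rfl | rfl <;> rcases zmod_two_cases j with rfl | rfl <;>
    simp (config := { decide := true }) [mul_apply, Wq, one_apply]

lemma one_kronecker_Wq_zero_one_mulVec_bell (m : ZMod 2) :
    ((1 : Matrix (ZMod 2) (ZMod 2) ℂ) ⊗ₖ Wq 0 1) *ᵥ bell 0 m = bell 0 (m + 1) := by
  ext ⟨a, b⟩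
  rcases zmod_two_cases m with rfl | rfl <;> rcases zmod_two_cases a with rfl | rfl <;>
  rcases zmod_two_cases b with rfl | rfl <;>
    simp (config := { decide := true }) [mulVec, dotProduct, Fintype.sum_prod_type,
      bell, Wq, one_apply]

lemma Kdeph_smul_add_smul {a b : ℝ} (hab : a + b = 1) (x y : ℝ) :
    Kdeph (a • x + b • y) = a • Kdeph x + b • Kdeph y := by
  obtain rfl : b = 1 - a := by linarith
  simp only [Kdeph, smul_eq_mul]
  module

lemma Kdeph_mem_segment {x y z : ℝ} (hz : z ∈ segment ℝ x y) :
    Kdeph z ∈ segment ℝ (Kdeph x) (Kdeph y) := by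
  obtain ⟨a, b, ha, hb, hab, rfl⟩ := hz
  exact ⟨a, b, ha, hb, hab, (Kdeph_smul_add_smul hab x y).symm⟩

lemma Kdeph_mem_allowedSet (q : ℝ) : Kdeph q ∈ allowedSet (Kdeph q) :=
  ⟨1, one_mem _, 1, one_mem _, by simp⟩

lemma Kdeph_neg_mem_allowedSet (q : ℝ) : Kdeph (-q) ∈ allowedSet (Kdeph q) := by
  refine ⟨1, one_mem _, Wq 0 1, Wq_zero_one_mem_unitaryGroup, ?_⟩
  simp only [Kdeph, mul_add, add_mul, Matrix.mul_smul, Matrix.smul_mul, bellProj_eq_vecMulVec,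
    mul_vecMulVec, vecMulVec_mul, ← star_mulVec, one_kronecker_Wq_zero_one_mulVec_bell, zero_add,
    show (1 + 1 : ZMod 2) = 0 from rfl]
  module

lemma posSemidef_smul_one_sub_Kdeph {q : ℝ} (hq0 : 0 ≤ q) :
    (((1 + q) / 2) • 1 - Kdeph q).PosSemidef := by
  have hdecomp : ((1 + q) / 2) • (1 : Matrix (ZMod 2 × ZMod 2) (ZMod 2 × ZMod 2) ℂ) - Kdeph q =
      ((1 + q) / 2) • (bellProj 1 0 + bellProj 1 1) + q • bellProj 0 1 := by
    rw [← sum_bellProj]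
    simp only [sum_zmod_two, Kdeph]
    module
  rw [hdecomp]
  have hproj (n m : ZMod 2) : (bellProj n m).PosSemidef := posSemidef_vecMulVec_self_star _
  exact (((hproj 1 0).add (hproj 1 1)).smul (by linarith)).add ((hproj 0 1).smul hq0)

lemma re_bell_dotProduct_Kdeph_mulVec (q : ℝ) :
    (star (bell 0 0) ⬝ᵥ (Kdeph q *ᵥ bell 0 0)).re = (1 + q) / 2 := by
  simp [Kdeph, bellProj_eq_vecMulVec, add_mulVec, smul_mulVec, vecMulVec_mulVec,
    star_bell_dotProduct_bell_zero_zero]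

lemma re_bell_dotProduct_mulVec_le_of_mem_allowedSet {q : ℝ} (hq0 : 0 ≤ q)
    {M : Matrix (ZMod 2 × ZMod 2) (ZMod 2 × ZMod 2) ℂ} (hM : M ∈ allowedSet (Kdeph q)) :
    (star (bell 0 0) ⬝ᵥ (M *ᵥ bell 0 0)).re ≤ (1 + q) / 2 := by
  obtain ⟨U, hU, V, hV, rfl⟩ := hM
  refine re_dotProduct_conj_mulVec_le (posSemidef_smul_one_sub_Kdeph hq0)
    (kronecker_mem_unitary hU hV) ?_
  simpa using star_bell_dotProduct_bell_zero_zero 0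

theorem dephasing_to_dephasing (q q' : ℝ)
    (hq0 : 0 ≤ q) (hq'0 : 0 ≤ q') :
    Kdeph q' ∈ convexHull ℝ (allowedSet (Kdeph q)) ↔ q' ≤ q := by
  constructor
  · intro h
    have hbound : (star (bell 0 0) ⬝ᵥ (Kdeph q' *ᵥ bell 0 0)).re ≤ (1 + q) / 2 :=
      convexHull_min (fun _ => re_bell_dotProduct_mulVec_le_of_mem_allowedSet hq0)
        (convex_halfSpace_le (isLinearMap_re_dotProduct_mulVec (bell 0 0)) _) h
    rw [re_bell_dotProduct_Kdeph_mulVec] at hbound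
    linarith
  · intro hle
    have hq' : q' ∈ segment ℝ q (-q) := by
      rw [segment_eq_uIcc, Set.mem_uIcc]
      exact Or.inr ⟨by linarith, hle⟩
    exact segment_subset_convexHull (Kdeph_mem_allowedSet q) (Kdeph_neg_mem_allowedSet q)
      (Kdeph_mem_segment hq')

end
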